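/- arXiv:0809.3731 — 9 statements merged into one kernel-verified Lean document; each statement's English description precedes it below -/
import Mathlib

section
/- If Φ and Ψ are two orthonormal bases of ℝ^N (or ℂ^N) with coherence μ = max_{ℓ,r} |⟨φ_ℓ, ψ_r⟩|, and a nonzero vector x has representations x = Σ a_ℓ φ_ℓ = Σ b_ℓ ψ_ℓ with A = ‖a‖₀ and B = ‖b‖₀ nonzero coefficients respectively, then √(A·B) ≥ 1/μ. -/
/-!
Expanding `x` in both bases, `‖x‖² = ⟪x, x⟫ = ∑ₗ ∑ᵣ conj aₗ · bᵣ · ⟪φₗ, ψᵣ⟫`, so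
`‖x‖² ≤ μ ‖a‖₁ ‖b‖₁`. By Cauchy–Schwarz on the supports and Parseval, `‖a‖₁ ≤ √A ‖x‖` and
`‖b‖₁ ≤ √B ‖x‖`; dividing by `‖x‖² > 0` gives `1 ≤ μ √(AB)`.
-/

open Finset RCLike ComplexConjugate
open scoped InnerProductSpace

lemma EuclideanSpace.sum_norm_le_sqrt_card_mul_norm {𝕜 ι : Type*} [RCLike 𝕜] [Fintype ι]
    (v : EuclideanSpace 𝕜 ι) {s : Finset ι} (hs : ∀ i ∉ s, v i = 0) :
    ∑ i, ‖v i‖ ≤ √(#s) * ‖v‖ := by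
  have hsupp : ∀ f : 𝕜 → ℝ, f 0 = 0 → ∑ i ∈ s, f (v i) = ∑ i, f (v i) := fun f hf ↦
    sum_subset (subset_univ s) fun i _ hi ↦ by rw [hs i hi, hf]
  calc ∑ i, ‖v i‖ = ∑ i ∈ s, 1 * ‖v i‖ := by simp [hsupp (‖·‖) norm_zero]
    _ ≤ √(∑ i ∈ s, 1 ^ 2) * √(∑ i ∈ s, ‖v i‖ ^ 2) := Real.sum_mul_le_sqrt_mul_sqrt _ _ _
    _ = √(#s) * ‖v‖ := by
      rw [hsupp (‖·‖ ^ 2) (by simp), ← EuclideanSpace.norm_sq_eq, Real.sqrt_sq (norm_nonneg v)]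
      simp

lemma OrthonormalBasis.sum_norm_repr_le_sqrt_card_mul_norm {𝕜 ι E : Type*} [RCLike 𝕜]
    [Fintype ι] [NormedAddCommGroup E] [InnerProductSpace 𝕜 E] (b : OrthonormalBasis ι 𝕜 E)
    {x : E} {s : Finset ι} (hs : ∀ i ∉ s, b.repr x i = 0) :
    ∑ i, ‖b.repr x i‖ ≤ √(#s) * ‖x‖ := by
  simpa only [LinearIsometryEquiv.norm_map] using
    (b.repr x).sum_norm_le_sqrt_card_mul_norm hs

section

variable {𝕜 ι κ E : Type*} [RCLike 𝕜] [Fintype ι] [Fintype κ]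
  [NormedAddCommGroup E] [InnerProductSpace 𝕜 E]

lemma OrthonormalBasis.inner_self_eq_sum_sum (φ : OrthonormalBasis ι 𝕜 E)
    (ψ : OrthonormalBasis κ 𝕜 E) (x : E) :
    ⟪x, x⟫_𝕜 = ∑ i, ∑ j, conj (φ.repr x i) * ψ.repr x j * ⟪φ i, ψ j⟫_𝕜 := by
  calc ⟪x, x⟫_𝕜 = ⟪∑ i, φ.repr x i • φ i, ∑ j, ψ.repr x j • ψ j⟫_𝕜 := by
        rw [φ.sum_repr, ψ.sum_repr]
    _ = _ := by simp_rw [sum_inner, inner_sum, inner_smul_left, inner_smul_right, mul_assoc]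

lemma OrthonormalBasis.norm_sq_le_mul_sum_norm_repr_mul_sum_norm_repr
    (φ : OrthonormalBasis ι 𝕜 E) (ψ : OrthonormalBasis κ 𝕜 E) {μ : ℝ}
    (hμ : ∀ i j, ‖⟪φ i, ψ j⟫_𝕜‖ ≤ μ) (x : E) :
    ‖x‖ ^ 2 ≤ μ * ((∑ i, ‖φ.repr x i‖) * ∑ j, ‖ψ.repr x j‖) := by
  rw [@norm_sq_eq_re_inner 𝕜, sum_mul_sum, mul_sum]
  refine (re_le_norm _).trans ?_
  rw [φ.inner_self_eq_sum_sum ψ]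
  refine (norm_sum_le _ _).trans (sum_le_sum fun i _ ↦ ?_)
  rw [mul_sum]
  refine (norm_sum_le _ _).trans (sum_le_sum fun j _ ↦ ?_)
  rw [norm_mul, norm_mul, norm_conj, mul_comm μ]
  gcongr
  exact hμ i j

theorem OrthonormalBasis.one_le_mul_sqrt_card_mul_card
    (φ : OrthonormalBasis ι 𝕜 E) (ψ : OrthonormalBasis κ 𝕜 E) {μ : ℝ}
    (hμ : ∀ i j, ‖⟪φ i, ψ j⟫_𝕜‖ ≤ μ) {x : E} (hx : x ≠ 0) {s : Finset ι} {t : Finset κ}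
    (hs : ∀ i ∉ s, φ.repr x i = 0) (ht : ∀ j ∉ t, ψ.repr x j = 0) :
    1 ≤ μ * √(#s * #t) := by
  have hx2 : 0 < ‖x‖ ^ 2 := by positivity
  have hnorm_sq := φ.norm_sq_le_mul_sum_norm_repr_mul_sum_norm_repr ψ hμ x
  have hμ0 : 0 < μ := pos_of_mul_pos_left (hx2.trans_le hnorm_sq) (by positivity)
  calc 1 = ‖x‖ ^ 2 / ‖x‖ ^ 2 := (div_self hx2.ne').symm
    _ ≤ μ * ((√(#s) * ‖x‖) * (√(#t) * ‖x‖)) / ‖x‖ ^ 2 := by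
      gcongr
      refine hnorm_sq.trans (mul_le_mul_of_nonneg_left ?_ hμ0.le)
      gcongr
      exacts [φ.sum_norm_repr_le_sqrt_card_mul_norm hs, ψ.sum_norm_repr_le_sqrt_card_mul_norm ht]
    _ = μ * √(#s * #t) := by
      rw [Real.sqrt_mul (Nat.cast_nonneg _)]
      field_simp

end

theorem stmt0_general {N : ℕ}
    (φ ψ : OrthonormalBasis (Fin N) ℂ (EuclideanSpace ℂ (Fin N)))
    (μ : ℝ)
    (hμ : μ = ⨆ ℓ : Fin N, ⨆ r : Fin N, ‖(inner ℂ (φ ℓ) (ψ r) : ℂ)‖)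
    (x : EuclideanSpace ℂ (Fin N)) (hx : x ≠ 0)
    (A B : ℕ)
    (hA : A = (Finset.univ.filter fun ℓ : Fin N => φ.repr x ℓ ≠ 0).card)
    (hB : B = (Finset.univ.filter fun ℓ : Fin N => ψ.repr x ℓ ≠ 0).card) :
    Real.sqrt ((A : ℝ) * B) ≥ 1 / μ := by
  have hcoh : ∀ ℓ r, ‖⟪φ ℓ, ψ r⟫_ℂ‖ ≤ μ := fun ℓ r ↦ by
    rw [hμ]
    exact le_ciSup_of_le (Finite.bddAbove_range _) ℓ <|
      le_ciSup (f := fun r ↦ ‖⟪φ ℓ, ψ r⟫_ℂ‖) (Finite.bddAbove_range _) r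
  have key := φ.one_le_mul_sqrt_card_mul_card ψ hcoh hx
    (s := {ℓ | φ.repr x ℓ ≠ 0}) (t := {ℓ | ψ.repr x ℓ ≠ 0}) (by simp) (by simp)
  rw [← hA, ← hB] at key
  have hμ0 : 0 < μ := pos_of_mul_pos_left (one_pos.trans_le key) (Real.sqrt_nonneg _)
  exact (div_le_iff₀' hμ0).2 key

/-- Discrete uncertainty principle: if a nonzero vector has `A` nonzero coefficients
in an orthonormal basis `φ` and `B` nonzero coefficients in an orthonormal basis `ψ`,
then `√(A·B) ≥ 1/μ` where `μ` is the coherence. -/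
theorem stmt0 {N : ℕ} (hN : 0 < N)
    (φ ψ : OrthonormalBasis (Fin N) ℂ (EuclideanSpace ℂ (Fin N)))
    (μ : ℝ)
    (hμ : μ = ⨆ ℓ : Fin N, ⨆ r : Fin N, ‖(inner ℂ (φ ℓ) (ψ r) : ℂ)‖)
    (x : EuclideanSpace ℂ (Fin N)) (hx : x ≠ 0)
    (A B : ℕ)
    (hA : A = (Finset.univ.filter fun ℓ : Fin N => φ.repr x ℓ ≠ 0).card)
    (hB : B = (Finset.univ.filter fun ℓ : Fin N => ψ.repr x ℓ ≠ 0).card) :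
    Real.sqrt ((A : ℝ) * B) ≥ 1 / μ :=
  stmt0_general φ ψ μ hμ x hx A B hA hB
end

section
/- If Φ and Ψ are two orthonormal bases of ℝ^N with coherence μ, and a nonzero vector x has A nonzero coefficients in Φ and B nonzero coefficients in Ψ, then (A + B)/2 ≥ 1/μ. -/
/-! Write `x = ∑ aᵢ φᵢ`. Each coefficient `⟪ψⱼ, x⟫ = ∑ aᵢ ⟪ψⱼ, φᵢ⟫` is at most
`μ ∑ |aᵢ| ≤ μ √A ‖x‖` (Cauchy–Schwarz over the `A` nonzero `aᵢ`), so Parseval over the `B`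
nonzero `ψ`-coefficients gives `‖x‖² ≤ B μ² A ‖x‖²`, i.e. `√(AB) ≥ 1/μ`; the
arithmetic–geometric mean inequality finishes. -/

open Finset
open scoped InnerProductSpace

namespace OrthonormalBasis

variable {ι 𝕜 E : Type*} [Fintype ι] [RCLike 𝕜] [NormedAddCommGroup E] [InnerProductSpace 𝕜 E]

theorem sum_sq_norm_repr (b : OrthonormalBasis ι 𝕜 E) (x : E) :
    ∑ i, ‖b.repr x i‖ ^ 2 = ‖x‖ ^ 2 := by
  simp_rw [b.repr_apply_apply, b.sum_sq_norm_inner_right]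

theorem sq_sum_norm_repr_le (b : OrthonormalBasis ι 𝕜 E) (x : E) (S : Finset ι) :
    (∑ i ∈ S, ‖b.repr x i‖) ^ 2 ≤ #S * ‖x‖ ^ 2 := by
  calc (∑ i ∈ S, ‖b.repr x i‖) ^ 2 ≤ #S * ∑ i ∈ S, ‖b.repr x i‖ ^ 2 := sq_sum_le_card_mul_sum_sq
    _ ≤ #S * ‖x‖ ^ 2 := by
      rw [← b.sum_sq_norm_repr x]
      gcongr
      exact S.subset_univ

theorem sum_repr_of_support_subset (b : OrthonormalBasis ι 𝕜 E) {x : E} {S : Finset ι}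
    (hS : ∀ i ∉ S, b.repr x i = 0) : ∑ i ∈ S, b.repr x i • b i = x := by
  conv_rhs => rw [← b.sum_repr x]
  exact sum_subset S.subset_univ fun i _ hi => by rw [hS i hi, zero_smul]

theorem norm_repr_le_mul_sum_norm_repr (φ ψ : OrthonormalBasis ι 𝕜 E) {μ : ℝ}
    (hμ : ∀ i j, ‖⟪φ i, ψ j⟫_𝕜‖ ≤ μ) {x : E} {S : Finset ι} (hS : ∀ i ∉ S, φ.repr x i = 0)
    (j : ι) : ‖ψ.repr x j‖ ≤ μ * ∑ i ∈ S, ‖φ.repr x i‖ := by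
  have hexpand : ψ.repr x j = ∑ i ∈ S, φ.repr x i * ⟪ψ j, φ i⟫_𝕜 := by
    conv_lhs => rw [← φ.sum_repr_of_support_subset hS]
    simp only [ψ.repr_apply_apply, inner_sum, inner_smul_right]
  calc ‖ψ.repr x j‖ ≤ ∑ i ∈ S, ‖φ.repr x i‖ * ‖⟪ψ j, φ i⟫_𝕜‖ := by
        rw [hexpand]
        exact (norm_sum_le _ _).trans_eq (sum_congr rfl fun i _ => norm_mul _ _)
    _ ≤ ∑ i ∈ S, ‖φ.repr x i‖ * μ := by
        gcongr with i
        rw [norm_inner_symm]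
        exact hμ i j
    _ = μ * ∑ i ∈ S, ‖φ.repr x i‖ := by rw [← sum_mul, mul_comm]

theorem norm_sq_le_card_mul_sq (b : OrthonormalBasis ι 𝕜 E) {x : E} {T : Finset ι}
    (hT : ∀ i ∉ T, b.repr x i = 0) {M : ℝ} (hM : ∀ i, ‖b.repr x i‖ ≤ M) :
    ‖x‖ ^ 2 ≤ #T * M ^ 2 := by
  calc ‖x‖ ^ 2 = ∑ i ∈ T, ‖b.repr x i‖ ^ 2 := by
        rw [← b.sum_sq_norm_repr x]
        exact (sum_subset T.subset_univ fun i _ hi => by simp [hT i hi]).symm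
    _ ≤ #T * M ^ 2 := by
        simpa using sum_le_card_nsmul T _ _ fun i _ => pow_le_pow_left₀ (norm_nonneg _) (hM i) 2

theorem one_le_card_mul_card_mul_sq (φ ψ : OrthonormalBasis ι 𝕜 E) {μ : ℝ}
    (hμ : ∀ i j, ‖⟪φ i, ψ j⟫_𝕜‖ ≤ μ) {x : E} (hx : x ≠ 0) {S T : Finset ι}
    (hS : ∀ i ∉ S, φ.repr x i = 0) (hT : ∀ j ∉ T, ψ.repr x j = 0) :
    1 ≤ #S * #T * μ ^ 2 := by
  have hx2 : 0 < ‖x‖ ^ 2 := by positivity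
  have hnorm := calc ‖x‖ ^ 2 ≤ #T * (μ * ∑ i ∈ S, ‖φ.repr x i‖) ^ 2 :=
        ψ.norm_sq_le_card_mul_sq hT (φ.norm_repr_le_mul_sum_norm_repr ψ hμ hS)
    _ = #T * μ ^ 2 * (∑ i ∈ S, ‖φ.repr x i‖) ^ 2 := by ring
    _ ≤ #T * μ ^ 2 * (#S * ‖x‖ ^ 2) := by gcongr; exact φ.sq_sum_norm_repr_le x S
    _ = (#S * #T * μ ^ 2) * ‖x‖ ^ 2 := by ring
  exact (le_mul_iff_one_le_left hx2).mp (by simpa using hnorm)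

end OrthonormalBasis

theorem one_div_le_add_div_two_of_one_le_mul_mul_sq {a b μ : ℝ} (ha : 0 ≤ a) (hb : 0 ≤ b)
    (h : 1 ≤ a * b * μ ^ 2) : 1 / μ ≤ (a + b) / 2 := by
  rcases le_or_gt μ 0 with hμ | hμ
  · linarith [one_div_nonpos.mpr hμ]
  · have hsq : (1 / μ) ^ 2 ≤ ((a + b) / 2) ^ 2 := by
      rw [div_pow, one_pow, div_le_iff₀ (by positivity)]
      nlinarith [four_mul_le_sq_add a b]
    exact (pow_le_pow_iff_left₀ (by positivity) (by positivity) two_ne_zero).mp hsq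

theorem stmt1_general {N : ℕ}
    (φ ψ : OrthonormalBasis (Fin N) ℂ (EuclideanSpace ℂ (Fin N)))
    (μ : ℝ)
    (hμ : μ = ⨆ ℓ : Fin N, ⨆ r : Fin N, ‖(inner ℂ (φ ℓ) (ψ r) : ℂ)‖)
    (x : EuclideanSpace ℂ (Fin N)) (hx : x ≠ 0)
    (A B : ℕ)
    (hA : A = (Finset.univ.filter fun ℓ : Fin N => φ.repr x ℓ ≠ 0).card)
    (hB : B = (Finset.univ.filter fun ℓ : Fin N => ψ.repr x ℓ ≠ 0).card) :
    ((A : ℝ) + B) / 2 ≥ 1 / μ := by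
  have hcoh : ∀ ℓ r, ‖(inner ℂ (φ ℓ) (ψ r) : ℂ)‖ ≤ μ := fun ℓ r =>
    hμ ▸ le_ciSup_of_le (Set.finite_range _).bddAbove ℓ
      (le_ciSup (f := fun r => ‖(inner ℂ (φ ℓ) (ψ r) : ℂ)‖) (Set.finite_range _).bddAbove r)
  have hAB := φ.one_le_card_mul_card_mul_sq ψ hcoh hx
    (S := univ.filter fun ℓ => φ.repr x ℓ ≠ 0) (T := univ.filter fun ℓ => ψ.repr x ℓ ≠ 0)
    (fun ℓ hℓ => by simpa using hℓ) (fun r hr => by simpa using hr)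
  rw [← hA, ← hB] at hAB
  exact one_div_le_add_div_two_of_one_le_mul_mul_sq A.cast_nonneg B.cast_nonneg hAB

/-- Additive form of the discrete uncertainty principle: `(A + B)/2 ≥ 1/μ`. -/
theorem stmt1 {N : ℕ} (hN : 0 < N)
    (φ ψ : OrthonormalBasis (Fin N) ℂ (EuclideanSpace ℂ (Fin N)))
    (μ : ℝ)
    (hμ : μ = ⨆ ℓ : Fin N, ⨆ r : Fin N, ‖(inner ℂ (φ ℓ) (ψ r) : ℂ)‖)
    (x : EuclideanSpace ℂ (Fin N)) (hx : x ≠ 0)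
    (A B : ℕ)
    (hA : A = (Finset.univ.filter fun ℓ : Fin N => φ.repr x ℓ ≠ 0).card)
    (hB : B = (Finset.univ.filter fun ℓ : Fin N => ψ.repr x ℓ ≠ 0).card) :
    ((A : ℝ) + B) / 2 ≥ 1 / μ :=
  stmt1_general φ ψ μ hμ x hx A B hA hB
end

section
/- Let Φ and Ψ be two orthonormal bases of ℂ^N with coherence μ, and let D = [Φ Ψ] be the N×2N concatenated dictionary. If x = Dγ with ‖γ‖₀ < 1/μ, then γ is the unique representation of x with fewer than 1/μ nonzero entries: any γ' with Dγ' = x and ‖γ'‖₀ < 1/μ equals γ. -/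
/-!
If `v ≠ 0` has coefficient vectors `a`, `b` in the two bases, expanding `‖v‖² = ⟪v, v⟫` in both
gives `‖v‖² ≤ μ ‖a‖₁ ‖b‖₁`, and Cauchy–Schwarz on the supports gives `‖a‖₁² ≤ ‖a‖₀ ‖v‖²`,
`‖b‖₁² ≤ ‖b‖₀ ‖v‖²`. Hence `1 ≤ μ² ‖a‖₀ ‖b‖₀`, and by AM–GM `‖a‖₀ + ‖b‖₀ ≥ 2/μ`. A nonzero
`δ` with `Dδ = 0` splits as `Φa = -Ψb ≠ 0`, so `‖δ‖₀ ≥ 2/μ`; but two representations with fewer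
than `1/μ` nonzero entries differ by such a `δ` with `‖δ‖₀ < 2/μ`.
-/

open Finset

section Sparsity

variable {α β M : Type*} [Fintype α] [Fintype β]

-- `‖f‖₀`
open Classical in
noncomputable def sparsity [Zero M] (f : α → M) : ℕ := #{i | f i ≠ 0}

theorem sparsity_eq_card_filter [Zero M] (f : α → M) [DecidablePred fun i => f i ≠ 0] :
    sparsity f = #{i | f i ≠ 0} := by
  unfold sparsity
  congr

theorem sparsity_neg [SubtractionMonoid M] (f : α → M) : sparsity (-f) = sparsity f := by
  classical
  simp only [sparsity_eq_card_filter, Pi.neg_apply, ne_eq, neg_eq_zero]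

theorem sparsity_sub_le [AddGroup M] (f g : α → M) :
    sparsity (f - g) ≤ sparsity f + sparsity g := by
  classical
  simp only [sparsity_eq_card_filter]
  refine (card_le_card fun i hi => ?_).trans (card_union_le _ _)
  simp only [mem_filter, mem_univ, true_and, mem_union, Pi.sub_apply] at hi ⊢
  by_contra! h
  simp [h.1, h.2] at hi

theorem sparsity_comp_inl_add_sparsity_comp_inr [Zero M] (f : α ⊕ β → M) :
    sparsity (f ∘ Sum.inl) + sparsity (f ∘ Sum.inr) = sparsity f := by
  classical
  simp only [sparsity_eq_card_filter]
  rw [← card_toLeft_add_card_toRight (u := {i | f i ≠ 0})]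
  congr 2 <;> ext <;> simp

theorem sq_sum_norm_le_sparsity_mul {E : Type*} [SeminormedAddGroup E] (f : α → E) :
    (∑ i, ‖f i‖) ^ 2 ≤ sparsity f * ∑ i, ‖f i‖ ^ 2 := by
  classical
  have hsupp (g : E → ℝ) (hg : g 0 = 0) : ∑ i with f i ≠ 0, g (f i) = ∑ i, g (f i) :=
    sum_filter_of_ne fun i _ hi h => hi (by rw [h, hg])
  rw [sparsity_eq_card_filter, ← hsupp _ norm_zero, ← hsupp (‖·‖ ^ 2) (by simp)]
  exact sq_sum_le_card_mul_sum_sq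

end Sparsity

section UncertaintyPrinciple

variable {𝕜 E ι : Type*} [RCLike 𝕜] [NormedAddCommGroup E] [InnerProductSpace 𝕜 E] [Fintype ι]
  {φ ψ : OrthonormalBasis ι 𝕜 E} {μ : ℝ}

theorem norm_sq_le_mul_sum_norm_inner_mul_sum_norm_inner
    (hμ : ∀ ℓ r, ‖inner 𝕜 (φ ℓ) (ψ r)‖ ≤ μ) (v : E) :
    ‖v‖ ^ 2 ≤ μ * (∑ ℓ, ‖inner 𝕜 (φ ℓ) v‖) * ∑ r, ‖inner 𝕜 (ψ r) v‖ := by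
  have hvv : inner 𝕜 v v = ∑ ℓ, ∑ r,
      (starRingEnd 𝕜) (inner 𝕜 (φ ℓ) v) * inner 𝕜 (ψ r) v * inner 𝕜 (φ ℓ) (ψ r) := by
    calc inner 𝕜 v v
        = inner 𝕜 (∑ ℓ, inner 𝕜 (φ ℓ) v • φ ℓ) (∑ r, inner 𝕜 (ψ r) v • ψ r) := by
          rw [φ.sum_repr', ψ.sum_repr']
      _ = _ := by
          simp only [sum_inner, inner_sum, inner_smul_left, inner_smul_right, mul_sum]
          rw [sum_comm]
          exact sum_congr rfl fun ℓ _ => sum_congr rfl fun r _ => by ring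
  calc ‖v‖ ^ 2 = ‖inner 𝕜 v v‖ := by simp [inner_self_eq_norm_sq_to_K]
    _ ≤ ∑ ℓ, ∑ r, ‖inner 𝕜 (φ ℓ) v‖ * ‖inner 𝕜 (ψ r) v‖ * μ := by
      rw [hvv]
      refine (norm_sum_le _ _).trans (sum_le_sum fun ℓ _ => ?_)
      refine (norm_sum_le _ _).trans (sum_le_sum fun r _ => ?_)
      rw [norm_mul, norm_mul, RCLike.norm_conj]
      gcongr
      exact hμ ℓ r
    _ = μ * (∑ ℓ, ‖inner 𝕜 (φ ℓ) v‖) * ∑ r, ‖inner 𝕜 (ψ r) v‖ := by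
      rw [mul_assoc, sum_mul_sum, mul_sum]
      exact sum_congr rfl fun _ _ => by rw [mul_sum]; exact sum_congr rfl fun _ _ => by ring

-- Elad–Bruckstein uncertainty principle
theorem one_le_sq_mul_sparsity_mul_sparsity
    (hμ : ∀ ℓ r, ‖inner 𝕜 (φ ℓ) (ψ r)‖ ≤ μ) {v : E} (hv : v ≠ 0) :
    1 ≤ μ ^ 2 * sparsity (fun ℓ => inner 𝕜 (φ ℓ) v) * sparsity (fun r => inner 𝕜 (ψ r) v) := by
  set A : ℝ := (sparsity (fun ℓ => inner 𝕜 (φ ℓ) v) : ℝ)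
  set B : ℝ := (sparsity (fun r => inner 𝕜 (ψ r) v) : ℝ)
  have hA := sq_sum_norm_le_sparsity_mul (fun ℓ => inner 𝕜 (φ ℓ) v)
  have hB := sq_sum_norm_le_sparsity_mul (fun r => inner 𝕜 (ψ r) v)
  rw [φ.sum_sq_norm_inner_right] at hA
  rw [ψ.sum_sq_norm_inner_right] at hB
  have hkey := norm_sq_le_mul_sum_norm_inner_mul_sum_norm_inner hμ v
  have hv2 : 0 < ‖v‖ ^ 2 := by positivity
  have h4 : (‖v‖ ^ 2) ^ 2 ≤ (μ ^ 2 * A * B) * (‖v‖ ^ 2) ^ 2 :=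
    calc (‖v‖ ^ 2) ^ 2 ≤ (μ * (∑ ℓ, ‖inner 𝕜 (φ ℓ) v‖) * ∑ r, ‖inner 𝕜 (ψ r) v‖) ^ 2 := by
          gcongr
      _ = μ ^ 2 * (∑ ℓ, ‖inner 𝕜 (φ ℓ) v‖) ^ 2 * (∑ r, ‖inner 𝕜 (ψ r) v‖) ^ 2 := by ring
      _ ≤ μ ^ 2 * (A * ‖v‖ ^ 2) * (B * ‖v‖ ^ 2) := by gcongr
      _ = (μ ^ 2 * A * B) * (‖v‖ ^ 2) ^ 2 := by ring
  exact le_of_mul_le_mul_right (by simpa using h4) (by positivity)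

theorem two_le_mul_sparsity_add_sparsity (hμ : ∀ ℓ r, ‖inner 𝕜 (φ ℓ) (ψ r)‖ ≤ μ) (hμ0 : 0 ≤ μ)
    {v : E} (hv : v ≠ 0) :
    2 ≤ μ * (sparsity (fun ℓ => inner 𝕜 (φ ℓ) v) + sparsity (fun r => inner 𝕜 (ψ r) v)) := by
  have h := one_le_sq_mul_sparsity_mul_sparsity hμ hv
  set A : ℝ := (sparsity (fun ℓ => inner 𝕜 (φ ℓ) v) : ℝ)
  set B : ℝ := (sparsity (fun r => inner 𝕜 (ψ r) v) : ℝ)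
  have : 0 ≤ μ * (A + B) := by positivity
  nlinarith [sq_nonneg (μ * A - μ * B)]

theorem two_le_mul_sparsity_of_sum_smul_sumElim_eq_zero
    (hμ : ∀ ℓ r, ‖inner 𝕜 (φ ℓ) (ψ r)‖ ≤ μ) (hμ0 : 0 ≤ μ)
    {δ : ι ⊕ ι → 𝕜} (hδ : δ ≠ 0) (h : ∑ i, δ i • Sum.elim φ ψ i = 0) :
    2 ≤ μ * sparsity δ := by
  set v := ∑ ℓ, δ (Sum.inl ℓ) • φ ℓ
  have hsplit : v + ∑ r, δ (Sum.inr r) • ψ r = 0 := by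
    simpa only [Fintype.sum_sum_type, Sum.elim_inl, Sum.elim_inr] using h
  have hφ : (fun ℓ => inner 𝕜 (φ ℓ) v) = δ ∘ Sum.inl :=
    funext (φ.orthonormal.inner_right_fintype _)
  have hψ : (fun r => inner 𝕜 (ψ r) v) = -(δ ∘ Sum.inr) := by
    rw [eq_neg_of_add_eq_zero_left hsplit]
    funext r
    simp only [inner_neg_right, ψ.orthonormal.inner_right_fintype, Pi.neg_apply, Function.comp]
  have hv : v ≠ 0 := by
    intro hv0
    simp only [hv0, inner_zero_right] at hφ hψ
    refine hδ (funext (Sum.rec (fun ℓ => ?_) (fun r => ?_)))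
    · exact (congrFun hφ ℓ).symm
    · simpa using congrFun hψ r
  have h2 := two_le_mul_sparsity_add_sparsity hμ hμ0 hv
  rwa [hφ, hψ, sparsity_neg, ← Nat.cast_add, sparsity_comp_inl_add_sparsity_comp_inr] at h2

end UncertaintyPrinciple

theorem stmt4_general {N : ℕ}
    (φ ψ : OrthonormalBasis (Fin N) ℂ (EuclideanSpace ℂ (Fin N)))
    (μ : ℝ)
    (hμ : μ = ⨆ ℓ : Fin N, ⨆ r : Fin N, ‖(inner ℂ (φ ℓ) (ψ r) : ℂ)‖)
    (d : Fin N ⊕ Fin N → EuclideanSpace ℂ (Fin N))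
    (hd₁ : ∀ ℓ, d (Sum.inl ℓ) = φ ℓ) (hd₂ : ∀ ℓ, d (Sum.inr ℓ) = ψ ℓ)
    (x : EuclideanSpace ℂ (Fin N)) (γ γ' : Fin N ⊕ Fin N → ℂ)
    (hx : x = ∑ i : Fin N ⊕ Fin N, γ i • d i)
    (hx' : x = ∑ i : Fin N ⊕ Fin N, γ' i • d i)
    (hγ : ((Finset.univ.filter fun i : Fin N ⊕ Fin N => γ i ≠ 0).card : ℝ) < 1 / μ)
    (hγ' : ((Finset.univ.filter fun i : Fin N ⊕ Fin N => γ' i ≠ 0).card : ℝ) < 1 / μ) :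
    γ = γ' := by
  obtain rfl : d = Sum.elim φ ψ := funext (Sum.rec hd₁ hd₂)
  have hcoh : ∀ ℓ r, ‖inner ℂ (φ ℓ) (ψ r)‖ ≤ μ := fun ℓ r => by
    rw [hμ]
    exact le_ciSup_of_le (Finite.bddAbove_range _) ℓ
      (le_ciSup (f := fun r => ‖inner ℂ (φ ℓ) (ψ r)‖) (Finite.bddAbove_range _) r)
  rw [← sparsity_eq_card_filter] at hγ hγ'
  have hμpos : 0 < μ := one_div_pos.mp ((Nat.cast_nonneg _).trans_lt hγ)
  by_contra hne
  have hker : ∑ i, (γ - γ') i • Sum.elim φ ψ i = 0 := by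
    simp only [Pi.sub_apply, sub_smul, sum_sub_distrib, ← hx, ← hx', sub_self]
  have hspark := two_le_mul_sparsity_of_sum_smul_sumElim_eq_zero hcoh hμpos.le
    (sub_ne_zero.mpr hne) hker
  have hsub : (sparsity (γ - γ') : ℝ) ≤ sparsity γ + sparsity γ' := by
    exact_mod_cast sparsity_sub_le γ γ'
  rw [lt_div_iff₀ hμpos] at hγ hγ'
  linarith [mul_le_mul_of_nonneg_left hsub hμpos.le]

/-- Uniqueness of sparse representations in a dictionary made of two orthonormal bases:
if `‖γ‖₀ < 1/μ` then the representation is unique among all such sparse representations. -/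
theorem stmt4 {N : ℕ} (hN : 0 < N)
    (φ ψ : OrthonormalBasis (Fin N) ℂ (EuclideanSpace ℂ (Fin N)))
    (μ : ℝ)
    (hμ : μ = ⨆ ℓ : Fin N, ⨆ r : Fin N, ‖(inner ℂ (φ ℓ) (ψ r) : ℂ)‖)
    (d : Fin N ⊕ Fin N → EuclideanSpace ℂ (Fin N))
    (hd₁ : ∀ ℓ, d (Sum.inl ℓ) = φ ℓ) (hd₂ : ∀ ℓ, d (Sum.inr ℓ) = ψ ℓ)
    (x : EuclideanSpace ℂ (Fin N)) (γ γ' : Fin N ⊕ Fin N → ℂ)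
    (hx : x = ∑ i : Fin N ⊕ Fin N, γ i • d i)
    (hx' : x = ∑ i : Fin N ⊕ Fin N, γ' i • d i)
    (hγ : ((Finset.univ.filter fun i : Fin N ⊕ Fin N => γ i ≠ 0).card : ℝ) < 1 / μ)
    (hγ' : ((Finset.univ.filter fun i : Fin N ⊕ Fin N => γ' i ≠ 0).card : ℝ) < 1 / μ) :
    γ = γ' :=
  stmt4_general φ ψ μ hμ d hd₁ hd₂ x γ γ' hx hx' hγ hγ'
end

section
/- Let D = [Φ Ψ] be a dictionary consisting of two orthonormal bases of ℂ^N with coherence μ. Then every set of k columns of D with k ≤ 2/μ − 1 is linearly independent; equivalently, the Kruskal rank of D satisfies σ(D) ≥ 2/μ − 1. -/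
/-!
If `∑ aᵢ vᵢ + ∑ bⱼ wⱼ = 0` with `v`, `w` orthonormal and all `|⟪vᵢ, wⱼ⟫| ≤ μ`, then pairing
with `vᵢ` gives `aᵢ = -∑ bⱼ ⟪vᵢ, wⱼ⟫`, so `‖a‖₁ ≤ p μ ‖b‖₁` and symmetrically `‖b‖₁ ≤ q μ ‖a‖₁`,
where `p`, `q` are the numbers of columns taken from each basis. Hence `‖a‖₁ ≤ p q μ² ‖a‖₁`,
and `p + q ≤ 2/μ - 1` forces `p q μ² ≤ ((2 - μ)/2)² < 1`, so `a = 0`, and likewise `b = 0`.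
-/

open Finset

theorem mul_mul_sq_lt_one_of_add_le_two_div_sub_one {p q μ : ℝ} (hp : 0 ≤ p) (hq : 0 ≤ q)
    (h : p + q ≤ 2 / μ - 1) : p * q * μ ^ 2 < 1 := by
  rcases le_or_gt μ 0 with hμ | hμ
  · have : 2 / μ ≤ 0 := div_nonpos_of_nonneg_of_nonpos zero_le_two hμ
    linarith
  · have hsum : μ * (p + q) ≤ 2 - μ := by
      have := mul_le_mul_of_nonneg_left h hμ.le
      rwa [mul_sub, mul_div_cancel₀ _ hμ.ne', mul_one] at this
    have hsq : (μ * (p + q)) ^ 2 ≤ (2 - μ) ^ 2 := pow_le_pow_left₀ (by positivity) hsum 2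
    nlinarith [sq_nonneg (p - q)]

section Coherence

variable {𝕜 E ι κ : Type*} [RCLike 𝕜] [NormedAddCommGroup E] [InnerProductSpace 𝕜 E]
  {v : ι → E} {w : κ → E} {μ : ℝ} {s : Finset ι} {t : Finset κ} {a : ι → 𝕜} {b : κ → 𝕜}

theorem Orthonormal.sum_norm_le_of_sum_add_sum_eq_zero (hv : Orthonormal 𝕜 v)
    (hvw : ∀ i j, ‖inner 𝕜 (v i) (w j)‖ ≤ μ)
    (hrel : ∑ i ∈ s, a i • v i + ∑ j ∈ t, b j • w j = 0) :
    ∑ i ∈ s, ‖a i‖ ≤ #s * (μ * ∑ j ∈ t, ‖b j‖) := by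
  have hpt : ∀ i ∈ s, ‖a i‖ ≤ μ * ∑ j ∈ t, ‖b j‖ := fun i hi => calc
    ‖a i‖ = ‖∑ j ∈ t, b j * inner 𝕜 (v i) (w j)‖ := by
      rw [← hv.inner_right_sum a hi, eq_neg_of_add_eq_zero_left hrel, inner_neg_right, norm_neg,
        inner_sum]
      simp only [inner_smul_right]
    _ ≤ ∑ j ∈ t, ‖b j‖ * μ := by
      refine (norm_sum_le _ _).trans (sum_le_sum fun j _ => ?_)
      rw [norm_mul]
      exact mul_le_mul_of_nonneg_left (hvw i j) (norm_nonneg _)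
    _ = μ * ∑ j ∈ t, ‖b j‖ := by rw [← sum_mul, mul_comm]
  simpa using sum_le_card_nsmul s _ _ hpt

theorem Orthonormal.eq_zero_of_sum_add_sum_eq_zero (hv : Orthonormal 𝕜 v) (hw : Orthonormal 𝕜 w)
    (hvw : ∀ i j, ‖inner 𝕜 (v i) (w j)‖ ≤ μ) (hcard : (#s + #t : ℝ) ≤ 2 / μ - 1)
    (hrel : ∑ i ∈ s, a i • v i + ∑ j ∈ t, b j • w j = 0) : ∀ i ∈ s, a i = 0 := by
  have hwv : ∀ j i, ‖inner 𝕜 (w j) (v i)‖ ≤ μ := fun j i =>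
    (norm_inner_symm (𝕜 := 𝕜) _ _).trans_le (hvw i j)
  have hA := hv.sum_norm_le_of_sum_add_sum_eq_zero hvw hrel
  have hB := hw.sum_norm_le_of_sum_add_sum_eq_zero hwv ((add_comm _ _).trans hrel)
  have hlt := mul_mul_sq_lt_one_of_add_le_two_div_sub_one (#s).cast_nonneg (#t).cast_nonneg hcard
  have hμ : 0 ≤ μ := by
    by_contra! hμ
    have : 2 / μ < 0 := div_neg_of_pos_of_neg two_pos hμ
    linarith [(#s).cast_nonneg (α := ℝ), (#t).cast_nonneg (α := ℝ)]
  have hA0 : ∑ i ∈ s, ‖a i‖ ≤ 0 := by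
    have := mul_le_mul_of_nonneg_left hB (mul_nonneg (#s).cast_nonneg hμ)
    nlinarith [sum_nonneg fun i (_ : i ∈ s) => norm_nonneg (a i)]
  intro i hi
  exact norm_eq_zero.1 <| (sum_eq_zero_iff_of_nonneg fun i _ => norm_nonneg (a i)).1
    (hA0.antisymm (sum_nonneg fun i _ => norm_nonneg _)) i hi

theorem linearIndepOn_of_orthonormal_of_card_le (d : ι ⊕ κ → E)
    (hl : Orthonormal 𝕜 (d ∘ Sum.inl)) (hr : Orthonormal 𝕜 (d ∘ Sum.inr))
    (hμ : ∀ i j, ‖inner 𝕜 (d (Sum.inl i)) (d (Sum.inr j))‖ ≤ μ) {S : Finset (ι ⊕ κ)}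
    (hS : (#S : ℝ) ≤ 2 / μ - 1) : LinearIndepOn 𝕜 d S := by
  rw [linearIndepOn_finset_iff]
  intro g hg
  rw [sum_sum_eq_sum_toLeft_add_sum_toRight] at hg
  have hcard : (#S.toLeft + #S.toRight : ℝ) ≤ 2 / μ - 1 := by
    rwa [← Nat.cast_add, card_toLeft_add_card_toRight]
  rintro (i | j) hi
  · exact hl.eq_zero_of_sum_add_sum_eq_zero hr hμ hcard hg i (mem_toLeft.2 hi)
  · refine hr.eq_zero_of_sum_add_sum_eq_zero hl
      (fun j i => (norm_inner_symm (𝕜 := 𝕜) _ _).trans_le (hμ i j))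
      (by rwa [add_comm]) ((add_comm _ _).trans hg) j (mem_toRight.2 hi)

end Coherence

theorem stmt5_general {N : ℕ}
    (φ ψ : OrthonormalBasis (Fin N) ℂ (EuclideanSpace ℂ (Fin N)))
    (μ : ℝ)
    (hμ : μ = ⨆ ℓ : Fin N, ⨆ r : Fin N, ‖(inner ℂ (φ ℓ) (ψ r) : ℂ)‖)
    (d : Fin N ⊕ Fin N → EuclideanSpace ℂ (Fin N))
    (hd₁ : ∀ ℓ, d (Sum.inl ℓ) = φ ℓ) (hd₂ : ∀ ℓ, d (Sum.inr ℓ) = ψ ℓ) :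
    ∀ S : Finset (Fin N ⊕ Fin N), ((S.card : ℝ) ≤ 2 / μ - 1) →
      LinearIndependent ℂ (fun i : {i // i ∈ S} => d i.1) := by
  have hl : d ∘ Sum.inl = φ := funext hd₁
  have hr : d ∘ Sum.inr = ψ := funext hd₂
  have hcoh : ∀ ℓ r, ‖inner ℂ (d (Sum.inl ℓ)) (d (Sum.inr r))‖ ≤ μ := fun ℓ r => by
    rw [hd₁, hd₂, hμ]
    exact (le_ciSup (Set.finite_range _).bddAbove r).trans
      (le_ciSup (f := fun ℓ => ⨆ r, ‖inner ℂ (φ ℓ) (ψ r)‖) (Set.finite_range _).bddAbove ℓ)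
  intro S hS
  exact linearIndepOn_of_orthonormal_of_card_le d (hl ▸ φ.orthonormal) (hr ▸ ψ.orthonormal)
    hcoh hS

/-- Kruskal-rank bound for a two-orthonormal-bases dictionary: every set of at most
`2/μ − 1` columns of `D = [Φ Ψ]` is linearly independent. -/
theorem stmt5 {N : ℕ} (hN : 0 < N)
    (φ ψ : OrthonormalBasis (Fin N) ℂ (EuclideanSpace ℂ (Fin N)))
    (μ : ℝ)
    (hμ : μ = ⨆ ℓ : Fin N, ⨆ r : Fin N, ‖(inner ℂ (φ ℓ) (ψ r) : ℂ)‖)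
    (d : Fin N ⊕ Fin N → EuclideanSpace ℂ (Fin N))
    (hd₁ : ∀ ℓ, d (Sum.inl ℓ) = φ ℓ) (hd₂ : ∀ ℓ, d (Sum.inr ℓ) = ψ ℓ) :
    ∀ S : Finset (Fin N ⊕ Fin N), ((S.card : ℝ) ≤ 2 / μ - 1) →
      LinearIndependent ℂ (fun i : {i // i ∈ S} => d i.1) :=
  stmt5_general φ ψ μ hμ d hd₁ hd₂
end

section
/- For an arbitrary dictionary D (a matrix with nonzero columns d_ℓ) with coherence μ(D) = max_{ℓ≠r} |⟨d_ℓ, d_r⟩|/(‖d_ℓ‖‖d_r‖), the Kruskal rank satisfies σ(D) > 1/μ(D) − 1; i.e., every set of k columns with k ≤ 1/μ(D) is linearly independent provided k < 1/μ(D) + 1. -/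
/-!
Normalise the columns. Their Gram matrix then has unit diagonal and off-diagonal entries of
modulus at most `μ`, so for `k` columns with `μ (k - 1) < 1` it is strictly diagonally dominant,
hence nonsingular by the Lévy–Desplanques theorem; a family with nonsingular Gram matrix is
linearly independent, and rescaling by the nonzero norms does not affect independence.
-/

open Finset Matrix

open scoped InnerProductSpace

section Coherence

variable {𝕜 E ι : Type*} [RCLike 𝕜] [NormedAddCommGroup E] [InnerProductSpace 𝕜 E]

theorem linearIndependent_of_norm_eq_one_of_norm_inner_le [Fintype ι] {v : ι → E} {μ : ℝ}
    (hv : ∀ i, ‖v i‖ = 1) (hμ : ∀ i j, i ≠ j → ‖⟪v i, v j⟫_𝕜‖ ≤ μ)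
    (hcard : μ * (Fintype.card ι - 1) < 1) : LinearIndependent 𝕜 v := by
  classical
  refine linearIndependent_of_det_gram_ne_zero (det_ne_zero_of_sum_row_lt_diag fun i => ?_)
  have hι : 0 < Fintype.card ι := Fintype.card_pos_iff.mpr ⟨i⟩
  calc ∑ j ∈ univ.erase i, ‖gram 𝕜 v i j‖
      ≤ ∑ _j ∈ univ.erase i, μ := sum_le_sum fun j hj => hμ i j (ne_of_mem_erase hj).symm
    _ = μ * (Fintype.card ι - 1) := by
      rw [sum_const, card_erase_of_mem (mem_univ i), card_univ, nsmul_eq_mul, Nat.cast_pred hι,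
        mul_comm]
    _ < 1 := hcard
    _ = ‖gram 𝕜 v i i‖ := by simp [hv i]

theorem norm_inner_smul_inv_norm (x y : E) :
    ‖⟪(‖x‖⁻¹ : 𝕜) • x, (‖y‖⁻¹ : 𝕜) • y⟫_𝕜‖ = ‖⟪x, y⟫_𝕜‖ / (‖x‖ * ‖y‖) := by
  simp [inner_smul_left, inner_smul_right, div_eq_mul_inv, mul_comm, mul_assoc]

theorem linearIndependent_of_norm_inner_le_mul [Fintype ι] {v : ι → E} {μ : ℝ}
    (hv : ∀ i, v i ≠ 0) (hμ : ∀ i j, i ≠ j → ‖⟪v i, v j⟫_𝕜‖ ≤ μ * (‖v i‖ * ‖v j‖))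
    (hcard : μ * (Fintype.card ι - 1) < 1) : LinearIndependent 𝕜 v := by
  let w : ι → 𝕜ˣ := fun i => Units.mk0 (‖v i‖ : 𝕜) (by simpa using hv i)
  have hw : ∀ i, (w⁻¹ • v) i = (‖v i‖⁻¹ : 𝕜) • v i := fun i => by simp [w, Units.smul_def]
  rw [← LinearIndependent.units_smul_iff v w⁻¹]
  refine linearIndependent_of_norm_eq_one_of_norm_inner_le (fun i => ?_) (fun i j hij => ?_) hcard
  · rw [hw]; exact norm_smul_inv_norm (hv i)
  · rw [hw, hw, norm_inner_smul_inv_norm,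
      div_le_iff₀ (mul_pos (norm_pos_iff.mpr (hv i)) (norm_pos_iff.mpr (hv j)))]
    exact hμ i j hij

end Coherence

/-- Kruskal-rank bound for arbitrary dictionaries: every set of `k` columns with
`k < 1/μ(D) + 1` is linearly independent. -/
theorem stmt6 {N m : ℕ}
    (d : Fin m → EuclideanSpace ℂ (Fin N))
    (hd : ∀ ℓ, d ℓ ≠ 0)
    (μ : ℝ) (hμpos : 0 < μ)
    (hμ : ∀ ℓ r, ℓ ≠ r → ‖(inner ℂ (d ℓ) (d r) : ℂ)‖ ≤ μ * (‖d ℓ‖ * ‖d r‖)) :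
    ∀ S : Finset (Fin m), ((S.card : ℝ) < 1 / μ + 1) →
      LinearIndependent ℂ (fun i : {i // i ∈ S} => d i.1) := by
  intro S hS
  refine linearIndependent_of_norm_inner_le_mul (fun i => hd i)
    (fun i j hij => hμ i j (Subtype.coe_ne_coe.mpr hij)) ?_
  rw [Fintype.card_coe]
  exact (lt_div_iff₀' hμpos).mp (by linarith)
end

section
/- For any N×m matrix D with unit-norm columns and m > N, the coherence satisfies μ(D) ≥ √((m−N)/(N(m−1))). -/
/-!
The frame potential `∑ ℓ r |⟨d ℓ, d r⟩|²` is the squared Frobenius norm of the Gram matrix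
`Mᴴ M` (`M` the `N × m` matrix of coordinates of the `d ℓ`), which equals that of the `N × N`
frame operator `M Mᴴ`. The frame operator has trace `∑ ‖d ℓ‖² = m`, so by Cauchy–Schwarz on its
diagonal the potential is at least `m² / N`. On the other hand it is at most `m + m (m - 1) μ²`,
since the `m` diagonal terms equal `1` and the others are bounded by `μ²`. Comparing the two
bounds gives `μ² ≥ (m - N) / (N (m - 1))`.
-/

open Finset Matrix

namespace Matrix

variable {𝕜 : Type*} [RCLike 𝕜] {m n : Type*} [Fintype m] [Fintype n]

theorem sum_norm_sq_eq_re_trace_conjTranspose_mul_self (A : Matrix m n 𝕜) :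
    ∑ i, ∑ j, ‖A i j‖ ^ 2 = RCLike.re (Aᴴ * A).trace := by
  simp only [trace, diag, mul_apply, conjTranspose_apply, RCLike.star_def, RCLike.conj_mul,
    map_sum, ← RCLike.ofReal_pow, RCLike.ofReal_re]
  exact Finset.sum_comm

theorem sum_norm_sq_conjTranspose_mul_self (M : Matrix m n 𝕜) :
    ∑ k, ∑ l, ‖(Mᴴ * M) k l‖ ^ 2 = ∑ i, ∑ j, ‖(M * Mᴴ) i j‖ ^ 2 := by
  simp only [sum_norm_sq_eq_re_trace_conjTranspose_mul_self, conjTranspose_mul,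
    conjTranspose_conjTranspose, Matrix.mul_assoc]
  rw [trace_mul_comm, Matrix.mul_assoc, Matrix.mul_assoc]

theorem sq_re_trace_le_card_mul_sum_norm_sq (A : Matrix n n 𝕜) :
    RCLike.re A.trace ^ 2 ≤ Fintype.card n * ∑ i, ∑ j, ‖A i j‖ ^ 2 := by
  have hdiag : ∀ i, RCLike.re (A i i) ^ 2 ≤ ∑ j, ‖A i j‖ ^ 2 := fun i =>
    calc RCLike.re (A i i) ^ 2 ≤ ‖A i i‖ ^ 2 := by
          rw [← sq_abs]; gcongr; exact RCLike.abs_re_le_norm _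
      _ ≤ ∑ j, ‖A i j‖ ^ 2 := single_le_sum (fun j _ => sq_nonneg ‖A i j‖) (mem_univ i)
  calc RCLike.re A.trace ^ 2 = (∑ i, RCLike.re (A i i)) ^ 2 := by simp [trace]
    _ ≤ Fintype.card n * ∑ i, RCLike.re (A i i) ^ 2 := sq_sum_le_card_mul_sum_sq
    _ ≤ Fintype.card n * ∑ i, ∑ j, ‖A i j‖ ^ 2 := by gcongr with i; exact hdiag i

end Matrix

section FramePotential

variable {𝕜 E ι : Type*} [RCLike 𝕜] [NormedAddCommGroup E] [InnerProductSpace 𝕜 E] [Fintype ι]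

theorem sq_sum_norm_sq_le_finrank_mul_sum_norm_inner_sq [FiniteDimensional 𝕜 E] (v : ι → E) :
    (∑ ℓ, ‖v ℓ‖ ^ 2) ^ 2 ≤ Module.finrank 𝕜 E * ∑ ℓ, ∑ r, ‖(inner 𝕜 (v ℓ) (v r) : 𝕜)‖ ^ 2 := by
  set M : Matrix (Fin (Module.finrank 𝕜 E)) ι 𝕜 :=
    of fun i j => (stdOrthonormalBasis 𝕜 E).repr (v j) i
  have hgram : gram 𝕜 v = Mᴴ * M := gram_eq_conjTranspose_mul _ v
  have htrace : RCLike.re (M * Mᴴ).trace = ∑ ℓ, ‖v ℓ‖ ^ 2 := by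
    rw [trace_mul_comm, ← hgram]
    simp [trace, gram_apply]
  have hpot : ∑ ℓ, ∑ r, ‖(inner 𝕜 (v ℓ) (v r) : 𝕜)‖ ^ 2 = ∑ i, ∑ j, ‖(M * Mᴴ) i j‖ ^ 2 := by
    rw [← sum_norm_sq_conjTranspose_mul_self, ← hgram]
    rfl
  simpa [htrace, hpot] using sq_re_trace_le_card_mul_sum_norm_sq (M * Mᴴ)

theorem sum_norm_inner_sq_le_of_norm_eq_one (v : ι → E) (hv : ∀ ℓ, ‖v ℓ‖ = 1) {μ : ℝ}
    (hμ : ∀ ℓ r, ℓ ≠ r → ‖(inner 𝕜 (v ℓ) (v r) : 𝕜)‖ ≤ μ) :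
    ∑ ℓ, ∑ r, ‖(inner 𝕜 (v ℓ) (v r) : 𝕜)‖ ^ 2
      ≤ Fintype.card ι * (1 + (Fintype.card ι - 1) * μ ^ 2) := by
  classical
  have hrow : ∀ ℓ, ∑ r, ‖(inner 𝕜 (v ℓ) (v r) : 𝕜)‖ ^ 2 ≤ 1 + (Fintype.card ι - 1) * μ ^ 2 := by
    intro ℓ
    have hoff : ∀ r ∈ univ.erase ℓ, ‖(inner 𝕜 (v ℓ) (v r) : 𝕜)‖ ^ 2 ≤ μ ^ 2 := fun r hr =>
      pow_le_pow_left₀ (norm_nonneg _) (hμ ℓ r (ne_of_mem_erase hr).symm) 2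
    calc ∑ r, ‖(inner 𝕜 (v ℓ) (v r) : 𝕜)‖ ^ 2
        = ‖(inner 𝕜 (v ℓ) (v ℓ) : 𝕜)‖ ^ 2 + ∑ r ∈ univ.erase ℓ, ‖(inner 𝕜 (v ℓ) (v r) : 𝕜)‖ ^ 2 :=
          (add_sum_erase _ _ (mem_univ ℓ)).symm
      _ ≤ 1 + (Fintype.card ι - 1) * μ ^ 2 := by
          have hcard : ((univ.erase ℓ).card : ℝ) = Fintype.card ι - 1 := by
            rw [card_erase_of_mem (mem_univ ℓ), card_univ,
              Nat.cast_pred (Fintype.card_pos_iff.mpr ⟨ℓ⟩)]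
          rw [inner_self_eq_norm_sq_to_K, hv ℓ, ← hcard, ← nsmul_eq_mul, ← sum_const]
          simpa using sum_le_sum hoff
  calc ∑ ℓ, ∑ r, ‖(inner 𝕜 (v ℓ) (v r) : 𝕜)‖ ^ 2
      ≤ ∑ _ℓ : ι, (1 + (Fintype.card ι - 1) * μ ^ 2) := sum_le_sum fun ℓ _ => hrow ℓ
    _ = Fintype.card ι * (1 + (Fintype.card ι - 1) * μ ^ 2) := by simp [mul_add]

end FramePotential

/-- Welch bound: an overcomplete dictionary of `m > N` unit-norm vectors in `ℂ^N`
has coherence at least `√((m−N)/(N(m−1)))`. -/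
theorem stmt7 {N m : ℕ} (hN : 0 < N) (hm : N < m)
    (d : Fin m → EuclideanSpace ℂ (Fin N))
    (hd : ∀ ℓ, ‖d ℓ‖ = 1)
    (μ : ℝ)
    (hμ : ∀ ℓ r, ℓ ≠ r → ‖(inner ℂ (d ℓ) (d r) : ℂ)‖ ≤ μ) :
    Real.sqrt (((m : ℝ) - N) / (N * ((m : ℝ) - 1))) ≤ μ := by
  have hμ0 : 0 ≤ μ :=
    (norm_nonneg _).trans (hμ ⟨0, by omega⟩ ⟨1, by omega⟩ (by simp [Fin.ext_iff]))
  have hlower := sq_sum_norm_sq_le_finrank_mul_sum_norm_inner_sq (𝕜 := ℂ) d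
  have hupper := sum_norm_inner_sq_le_of_norm_eq_one d hd hμ
  simp only [hd, one_pow, sum_const, card_univ, Fintype.card_fin, nsmul_eq_mul, mul_one,
    finrank_euclideanSpace_fin] at hlower hupper
  have hframe : (m : ℝ) ^ 2 ≤ N * (m * (1 + (m - 1) * μ ^ 2)) :=
    hlower.trans (mul_le_mul_of_nonneg_left hupper (Nat.cast_nonneg N))
  have hN1 : (1 : ℝ) ≤ N := by exact_mod_cast hN
  have hNm : (N : ℝ) + 1 ≤ m := by exact_mod_cast hm
  rw [Real.sqrt_le_left hμ0, div_le_iff₀ (by nlinarith)]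
  nlinarith
end

section
/- Let {φ_ℓ}_{ℓ=1}^N and {ψ_ℓ}_{ℓ=1}^N generate two orthonormal bases of the same shift-invariant subspace A of L² with shift T, and define the analog coherence μ(Φ,Ψ) = max_{ℓ,r} ess sup_ω |R_{φ_ℓ ψ_r}(e^{jω})|, where R_{φψ}(e^{jω}) is the DTFT of the cross-correlation sequence r_{φψ}[n] = ⟨φ(·−nT), ψ⟩. If a nonzero x ∈ A can be written using only A generators from {φ_ℓ} (i.e., at most A of the coefficient sequences a_ℓ[·] are not identically zero) and using only B generators from {ψ_ℓ}, then √(A·B) ≥ 1/μ(Φ,Ψ). -/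
open MeasureTheory Real
open scoped BigOperators

/-- The sampled cross-spectrum `R_{φψ}(e^{jω}) = (1/T) Σ_k conj(Φ((ω−2πk)/T)) Ψ((ω−2πk)/T)`,
expressed in terms of the Fourier transforms `Φ`, `Ψ` of the generators. -/
noncomputable def sampledCross (T : ℝ) (f g : ℝ → ℂ) (ω : ℝ) : ℂ :=
  (1 / (T : ℂ)) * ∑' k : ℤ, (starRingEnd ℂ) (f ((ω - 2 * π * k) / T)) * g ((ω - 2 * π * k) / T)

/-!
Fix a frequency `ω` and pair both expansions of `X` with the aliased samples of `Φ ℓ`.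
Since the coefficients are `2π`-periodic they factor out of the aliasing sum, so the
orthonormality of `Φ` gives `a ℓ ω = Σ_r b r ω · R_{φ_ℓ ψ_r}(ω)`, and symmetrically
`b r ω = Σ_ℓ a ℓ ω · R_{ψ_r φ_ℓ}(ω)`. With `s = Σ_{ℓ ∈ Sa} ‖a ℓ ω‖` and
`t = Σ_{r ∈ Sb} ‖b r ω‖` this yields `s ≤ A μ t` and `t ≤ B μ s`, hence `1 ≤ A B μ²` at
any frequency where some coefficient is nonzero; such frequencies exist because `X ≠ 0`.
-/

open Function

lemma summable_conj_mul_of_summable_norm_sq {ι : Type*} {f g : ι → ℂ}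
    (hf : Summable fun k => ‖f k‖ ^ 2) (hg : Summable fun k => ‖g k‖ ^ 2) :
    Summable fun k => starRingEnd ℂ (f k) * g k := by
  refine Summable.of_norm_bounded ((hf.add hg).mul_left (1 / 2)) fun k => ?_
  rw [norm_mul, RCLike.norm_conj]
  nlinarith [sq_nonneg (‖f k‖ - ‖g k‖)]

lemma sampledCross_swap (T : ℝ) (f g : ℝ → ℂ) (ω : ℝ) :
    sampledCross T g f ω = starRingEnd ℂ (sampledCross T f g ω) := by
  simp only [sampledCross, map_mul, map_div₀, map_one, Complex.conj_ofReal, Complex.conj_tsum,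
    Complex.conj_conj, mul_comm (f _)]

lemma summable_norm_sq_of_sampledCross_self_ne_zero {T : ℝ} {f : ℝ → ℂ} {ω : ℝ}
    (h : sampledCross T f f ω ≠ 0) :
    Summable fun k : ℤ => ‖f ((ω - 2 * π * k) / T)‖ ^ 2 := by
  by_contra hs
  have hs' : ¬Summable fun k : ℤ =>
      starRingEnd ℂ (f ((ω - 2 * π * k) / T)) * f ((ω - 2 * π * k) / T) := by
    simpa only [Complex.conj_mul', ← Complex.ofReal_pow, Complex.summable_ofReal] using hs
  exact h (by rw [sampledCross, tsum_eq_zero_of_not_summable hs', mul_zero])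

lemma sampledCross_sum_mul_periodic {ι : Type*} [Fintype ι] {T : ℝ} (hT : T ≠ 0)
    (f : ℝ → ℂ) (c ψ : ι → ℝ → ℂ) (hc : ∀ r, Periodic (c r) (2 * π)) (ω : ℝ)
    (hf : Summable fun k : ℤ => ‖f ((ω - 2 * π * k) / T)‖ ^ 2)
    (hψ : ∀ r, Summable fun k : ℤ => ‖ψ r ((ω - 2 * π * k) / T)‖ ^ 2) :
    sampledCross T f (fun u => ∑ r, c r (u * T) * ψ r u) ω =
      ∑ r, c r ω * sampledCross T f (ψ r) ω := by
  have hcω : ∀ r (k : ℤ), c r ((ω - 2 * π * k) / T * T) = c r ω := fun r k => by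
    rw [div_mul_cancel₀ _ hT, mul_comm (2 * π)]
    exact (hc r).sub_int_mul_eq k
  have hterm : ∀ r, Summable fun k : ℤ => c r ω *
      (starRingEnd ℂ (f ((ω - 2 * π * k) / T)) * ψ r ((ω - 2 * π * k) / T)) :=
    fun r => (summable_conj_mul_of_summable_norm_sq hf (hψ r)).mul_left _
  simp only [sampledCross, hcω, Finset.mul_sum, mul_left_comm _ (c _ ω)]
  rw [Summable.tsum_finsetSum fun r _ => hterm r, Finset.mul_sum]
  simp only [tsum_mul_left, mul_left_comm (1 / (T : ℂ))]

lemma coeff_eq_sum_mul_sampledCross {ι : Type*} [Fintype ι] [DecidableEq ι] {T : ℝ}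
    (hT : T ≠ 0) {Φ Ψ a b : ι → ℝ → ℂ}
    (ha : ∀ ℓ, Periodic (a ℓ) (2 * π)) (hb : ∀ r, Periodic (b r) (2 * π))
    (hab : ∀ u, ∑ ℓ, a ℓ (u * T) * Φ ℓ u = ∑ r, b r (u * T) * Ψ r u) {ω : ℝ}
    (hΦ : ∀ ℓ r, sampledCross T (Φ ℓ) (Φ r) ω = if ℓ = r then 1 else 0)
    (hΨ : ∀ r, sampledCross T (Ψ r) (Ψ r) ω ≠ 0) (ℓ : ι) :
    a ℓ ω = ∑ r, b r ω * sampledCross T (Φ ℓ) (Ψ r) ω := by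
  have hΦsum := fun r => summable_norm_sq_of_sampledCross_self_ne_zero (T := T) (f := Φ r) (ω := ω)
    (by simp [hΦ])
  have hΨsum := fun r => summable_norm_sq_of_sampledCross_self_ne_zero (hΨ r)
  calc a ℓ ω = ∑ r, a r ω * sampledCross T (Φ ℓ) (Φ r) ω := by simp [hΦ]
    _ = sampledCross T (Φ ℓ) (fun u => ∑ r, a r (u * T) * Φ r u) ω :=
      (sampledCross_sum_mul_periodic hT _ a Φ ha ω (hΦsum ℓ) hΦsum).symm
    _ = sampledCross T (Φ ℓ) (fun u => ∑ r, b r (u * T) * Ψ r u) ω := by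
      simp only [hab]
    _ = ∑ r, b r ω * sampledCross T (Φ ℓ) (Ψ r) ω :=
      sampledCross_sum_mul_periodic hT _ b Ψ hb ω (hΦsum ℓ) hΨsum

lemma norm_le_mul_sum_norm_of_eq_sum {ι : Type*} [Fintype ι] {x : ℂ} {b R : ι → ℂ}
    {S : Finset ι} {μ : ℝ} (hx : x = ∑ r, b r * R r) (hb : ∀ r ∉ S, b r = 0)
    (hR : ∀ r ∈ S, ‖R r‖ ≤ μ) :
    ‖x‖ ≤ μ * ∑ r ∈ S, ‖b r‖ := by
  rw [hx, ← Finset.sum_subset S.subset_univ fun r _ hr => by rw [hb r hr, zero_mul],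
    Finset.mul_sum]
  refine (norm_sum_le _ _).trans (Finset.sum_le_sum fun r hr => ?_)
  rw [norm_mul, mul_comm]
  exact mul_le_mul_of_nonneg_right (hR r hr) (norm_nonneg _)

lemma one_le_card_mul_card_mul_sq {ι E : Type*} [NormedAddCommGroup E] {α β : ι → E}
    {Sa Sb : Finset ι} {μ : ℝ}
    (hα : ∀ ℓ ∈ Sa, ‖α ℓ‖ ≤ μ * ∑ r ∈ Sb, ‖β r‖)
    (hβ : ∀ r ∈ Sb, ‖β r‖ ≤ μ * ∑ ℓ ∈ Sa, ‖α ℓ‖)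
    {ℓ₀ : ι} (hℓ₀ : ℓ₀ ∈ Sa) (hα₀ : α ℓ₀ ≠ 0) :
    1 ≤ (Sa.card : ℝ) * Sb.card * μ ^ 2 := by
  set s := ∑ ℓ ∈ Sa, ‖α ℓ‖
  set t := ∑ r ∈ Sb, ‖β r‖
  have ht : 0 ≤ t := Finset.sum_nonneg fun r _ => norm_nonneg _
  have hα₀pos : 0 < ‖α ℓ₀‖ := norm_pos_iff.2 hα₀
  have hs : 0 < s :=
    hα₀pos.trans_le (Finset.single_le_sum (fun ℓ _ => norm_nonneg (α ℓ)) hℓ₀)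
  have hμ : 0 < μ := pos_of_mul_pos_left (hα₀pos.trans_le (hα ℓ₀ hℓ₀)) ht
  have hst : s ≤ Sa.card * (μ * t) := by
    simpa using Finset.sum_le_sum hα
  have hts : t ≤ Sb.card * (μ * s) := by
    simpa using Finset.sum_le_sum hβ
  have hAμ : (0 : ℝ) ≤ Sa.card * μ := by positivity
  nlinarith [mul_le_mul_of_nonneg_left hts hAμ]

lemma one_div_le_sqrt_of_one_le_mul_sq {x μ : ℝ} (h : 1 ≤ x * μ ^ 2) : 1 / μ ≤ √x := by
  rcases le_or_gt μ 0 with hμ | hμ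
  · exact (one_div_nonpos.2 hμ).trans (sqrt_nonneg x)
  · rw [le_sqrt' (one_div_pos.2 hμ), div_pow, one_pow, div_le_iff₀ (by positivity)]
    exact h

lemma frequently_of_frequently_comp_mul_const {p : ℝ → Prop} {T : ℝ} (hT : T ≠ 0)
    (h : ∃ᵐ ω ∂(volume : Measure ℝ), p (ω * T)) : ∃ᵐ ν ∂(volume : Measure ℝ), p ν := by
  intro hν
  refine h (((Measure.quasiMeasurePreserving_smul volume hT).ae hν).mono fun ω hω => ?_)
  rwa [smul_eq_mul, mul_comm] at hω

theorem stmt9_general (N : ℕ) (T : ℝ) (hT : 0 < T)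
    (Φ Ψ : Fin N → ℝ → ℂ)
    (hΦorth : ∀ ℓ r, ∀ᵐ ω ∂(volume : Measure ℝ),
      sampledCross T (Φ ℓ) (Φ r) ω = if ℓ = r then 1 else 0)
    (hΨorth : ∀ ℓ r, ∀ᵐ ω ∂(volume : Measure ℝ),
      sampledCross T (Ψ ℓ) (Ψ r) ω = if ℓ = r then 1 else 0)
    (μ : ℝ)
    (hμ : ∀ ℓ r, ∀ᵐ ω ∂(volume : Measure ℝ), ‖sampledCross T (Φ ℓ) (Ψ r) ω‖ ≤ μ)
    (X : ℝ → ℂ)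
    (hXne : 0 < ∫ ω, ‖X ω‖ ^ 2)
    (a b : Fin N → ℝ → ℂ)
    (haper : ∀ ℓ, Function.Periodic (a ℓ) (2 * π))
    (hbper : ∀ ℓ, Function.Periodic (b ℓ) (2 * π))
    (hXa : ∀ ω, X ω = ∑ ℓ : Fin N, a ℓ (ω * T) * Φ ℓ ω)
    (hXb : ∀ ω, X ω = ∑ ℓ : Fin N, b ℓ (ω * T) * Ψ ℓ ω)
    (Sa Sb : Finset (Fin N))
    (hSa : ∀ ℓ, ℓ ∉ Sa → ∀ ω, a ℓ ω = 0)
    (hSb : ∀ ℓ, ℓ ∉ Sb → ∀ ω, b ℓ ω = 0) :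
    Real.sqrt ((Sa.card : ℝ) * Sb.card) ≥ 1 / μ := by
  have hab u : ∑ ℓ, a ℓ (u * T) * Φ ℓ u = ∑ r, b r (u * T) * Ψ r u := (hXa u).symm.trans (hXb u)
  have hbounds : ∀ᵐ ω ∂(volume : Measure ℝ),
      (∀ ℓ ∈ Sa, ‖a ℓ ω‖ ≤ μ * ∑ r ∈ Sb, ‖b r ω‖) ∧
      (∀ r ∈ Sb, ‖b r ω‖ ≤ μ * ∑ ℓ ∈ Sa, ‖a ℓ ω‖) := by
    filter_upwards [ae_all_iff.2 fun ℓ => ae_all_iff.2 (hΦorth ℓ),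
      ae_all_iff.2 fun ℓ => ae_all_iff.2 (hΨorth ℓ), ae_all_iff.2 fun ℓ => ae_all_iff.2 (hμ ℓ)]
      with ω hΦω hΨω hμω
    exact ⟨fun ℓ _ => norm_le_mul_sum_norm_of_eq_sum
        (coeff_eq_sum_mul_sampledCross hT.ne' haper hbper hab hΦω (by simp [hΨω]) ℓ)
        (fun r hr => hSb r hr ω) (fun r _ => hμω ℓ r),
      fun r _ => norm_le_mul_sum_norm_of_eq_sum
        (coeff_eq_sum_mul_sampledCross hT.ne' hbper haper (fun u => (hab u).symm) hΨω
          (by simp [hΦω]) r)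
        (fun ℓ hℓ => hSa ℓ hℓ ω)
        (fun ℓ _ => by rw [sampledCross_swap, RCLike.norm_conj]; exact hμω ℓ r)⟩
  have hXfreq : ∃ᵐ ω ∂(volume : Measure ℝ), X ω ≠ 0 := fun hX0 =>
    hXne.ne' (integral_eq_zero_of_ae (hX0.mono fun ω hω => by simp [not_not.1 hω]))
  have hafreq : ∃ᵐ ν ∂(volume : Measure ℝ), ∃ ℓ, a ℓ ν ≠ 0 :=
    frequently_of_frequently_comp_mul_const hT.ne' (hXfreq.mono fun ω hω => by
      obtain ⟨ℓ, -, hℓ⟩ := Finset.exists_ne_zero_of_sum_ne_zero (hXa ω ▸ hω)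
      exact ⟨ℓ, left_ne_zero_of_mul hℓ⟩)
  obtain ⟨ν, ⟨hνa, hνb⟩, ℓ, hℓ⟩ := (hbounds.and_frequently hafreq).exists
  have hℓSa : ℓ ∈ Sa := by_contra fun h => hℓ (hSa ℓ h ν)
  exact one_div_le_sqrt_of_one_le_mul_sq (one_le_card_mul_card_mul_sq hνa hνb hℓSa hℓ)

/-- Analog uncertainty principle for shift-invariant spaces: if a nonzero signal `X`
(in the Fourier domain) can be expanded using `A = Sa.card` generators of the orthonormal
family `Φ` and `B = Sb.card` generators of the orthonormal family `Ψ`, then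
`√(A·B) ≥ 1/μ(Φ,Ψ)` where `μ` bounds the sampled cross-spectra a.e. -/
theorem stmt9 (N : ℕ) (T : ℝ) (hT : 0 < T)
    (Φ Ψ : Fin N → ℝ → ℂ)
    (hΦmeas : ∀ ℓ, Measurable (Φ ℓ)) (hΨmeas : ∀ ℓ, Measurable (Ψ ℓ))
    (hΦorth : ∀ ℓ r, ∀ᵐ ω ∂(volume : Measure ℝ),
      sampledCross T (Φ ℓ) (Φ r) ω = if ℓ = r then 1 else 0)
    (hΨorth : ∀ ℓ r, ∀ᵐ ω ∂(volume : Measure ℝ),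
      sampledCross T (Ψ ℓ) (Ψ r) ω = if ℓ = r then 1 else 0)
    (μ : ℝ) (hμpos : 0 < μ)
    (hμ : ∀ ℓ r, ∀ᵐ ω ∂(volume : Measure ℝ), ‖sampledCross T (Φ ℓ) (Ψ r) ω‖ ≤ μ)
    (X : ℝ → ℂ)
    (hX2 : Integrable (fun ω => ‖X ω‖ ^ 2))
    (hXne : 0 < ∫ ω, ‖X ω‖ ^ 2)
    (a b : Fin N → ℝ → ℂ)
    (haper : ∀ ℓ, Function.Periodic (a ℓ) (2 * π))
    (hbper : ∀ ℓ, Function.Periodic (b ℓ) (2 * π))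
    (hXa : ∀ ω, X ω = ∑ ℓ : Fin N, a ℓ (ω * T) * Φ ℓ ω)
    (hXb : ∀ ω, X ω = ∑ ℓ : Fin N, b ℓ (ω * T) * Ψ ℓ ω)
    (Sa Sb : Finset (Fin N))
    (hSa : ∀ ℓ, ℓ ∉ Sa → ∀ ω, a ℓ ω = 0)
    (hSb : ∀ ℓ, ℓ ∉ Sb → ∀ ω, b ℓ ω = 0) :
    Real.sqrt ((Sa.card : ℝ) * Sb.card) ≥ 1 / μ :=
  stmt9_general N T hT Φ Ψ hΦorth hΨorth μ hμ X hXne a b haper hbper hXa hXb Sa Sb hSa hSb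
end

section
/- Let {φ_ℓ} and {ψ_ℓ} (ℓ = 1,…,N) generate two orthonormal bases of the same shift-invariant subspace A ⊂ L². Then for almost every ω, the N×N sampled cross-correlation matrix M_{φψ}(e^{jω}) with entries [M_{φψ}(e^{jω})]_{ℓr} = R_{φ_ℓψ_r}(e^{jω}) is unitary. -/
set_option maxHeartbeats 1000000


open MeasureTheory Real
open scoped BigOperators

/-- Summability of the squared norms along the sampling lattice, from a nonzero
diagonal sampled cross-spectrum. -/
lemma summable_sq_of_cross_ne_zero (T : ℝ) (f : ℝ → ℂ) (ω : ℝ)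
    (hne : sampledCross T f f ω ≠ 0) :
    Summable (fun k : ℤ => (‖f ((ω - 2 * π * k) / T)‖ ^ 2 : ℝ)) := by
  unfold sampledCross at hne
  have htsum : (∑' k : ℤ, (starRingEnd ℂ) (f ((ω - 2 * π * k) / T)) *
      f ((ω - 2 * π * k) / T)) ≠ 0 := by
    intro h; exact hne (by rw [h, mul_zero])
  have hs : Summable (fun k : ℤ =>
      (starRingEnd ℂ) (f ((ω - 2 * π * k) / T)) * f ((ω - 2 * π * k) / T)) := by
    by_contra h
    exact htsum (tsum_eq_zero_of_not_summable h)
  have heq : ∀ k : ℤ, (starRingEnd ℂ) (f ((ω - 2 * π * k) / T)) * f ((ω - 2 * π * k) / T)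
      = ((‖f ((ω - 2 * π * k) / T)‖ ^ 2 : ℝ) : ℂ) := by
    intro k
    simpa using RCLike.conj_mul (f ((ω - 2 * π * k) / T))
  rw [show (fun k : ℤ => (starRingEnd ℂ) (f ((ω - 2 * π * k) / T)) * f ((ω - 2 * π * k) / T))
      = fun k : ℤ => ((‖f ((ω - 2 * π * k) / T)‖ ^ 2 : ℝ) : ℂ) from funext heq] at hs
  exact Complex.summable_ofReal.mp hs

/-- Cauchy–Schwarz style summability for products. -/
lemma summable_pair {a b : ℤ → ℂ} (ha : Summable fun k => (‖a k‖ ^ 2 : ℝ))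
    (hb : Summable fun k => (‖b k‖ ^ 2 : ℝ)) :
    Summable (fun k : ℤ => (starRingEnd ℂ) (a k) * b k) := by
  apply Summable.of_norm
  refine Summable.of_nonneg_of_le (fun k => norm_nonneg _) (fun k => ?_) (ha.add hb)
  rw [norm_mul, RCLike.norm_conj]
  nlinarith [sq_nonneg (‖a k‖ - ‖b k‖), norm_nonneg (a k), norm_nonneg (b k)]

/-- Expansion of the first argument of the sampled cross-spectrum along a
periodic-coefficient decomposition. -/
lemma expand_first {N : ℕ} (T : ℝ) (hT : T ≠ 0) (Ψ : Fin N → ℝ → ℂ)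
    (c : Fin N → ℝ → ℂ) (hper : ∀ s, Function.Periodic (c s) (2 * π))
    (f g : ℝ → ℂ) (hf : ∀ ω', f ω' = ∑ s : Fin N, c s (ω' * T) * Ψ s ω') (ω : ℝ)
    (hsum : ∀ s, Summable (fun k : ℤ =>
      (starRingEnd ℂ) (Ψ s ((ω - 2 * π * k) / T)) * g ((ω - 2 * π * k) / T))) :
    sampledCross T f g ω
      = ∑ s : Fin N, (starRingEnd ℂ) (c s ω) * sampledCross T (Ψ s) g ω := by
  have hx : ∀ k : ℤ, ((ω - 2 * π * k) / T) * T = ω - 2 * π * k :=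
    fun k => div_mul_cancel₀ _ hT
  have hc : ∀ (s : Fin N) (k : ℤ), c s (ω - 2 * π * k) = c s ω := by
    intro s k
    have := (hper s).sub_int_mul_eq (x := ω) k
    rw [show (ω - (k : ℝ) * (2 * π)) = ω - 2 * π * k by ring] at this
    exact this
  have hterm : ∀ k : ℤ, (starRingEnd ℂ) (f ((ω - 2 * π * k) / T)) * g ((ω - 2 * π * k) / T)
      = ∑ s : Fin N, (starRingEnd ℂ) (c s ω) *
        ((starRingEnd ℂ) (Ψ s ((ω - 2 * π * k) / T)) * g ((ω - 2 * π * k) / T)) := by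
    intro k
    rw [hf, map_sum, Finset.sum_mul]
    refine Finset.sum_congr rfl fun s _ => ?_
    rw [map_mul, hx k, hc s k]; ring
  unfold sampledCross
  rw [tsum_congr hterm, Summable.tsum_finsetSum (fun s _ => (hsum s).mul_left _), Finset.mul_sum]
  refine Finset.sum_congr rfl fun s _ => ?_
  rw [tsum_mul_left]; ring

/-- Expansion of the second argument of the sampled cross-spectrum along a
periodic-coefficient decomposition. -/
lemma expand_second {N : ℕ} (T : ℝ) (hT : T ≠ 0) (Ψ : Fin N → ℝ → ℂ)
    (c : Fin N → ℝ → ℂ) (hper : ∀ s, Function.Periodic (c s) (2 * π))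
    (f g : ℝ → ℂ) (hf : ∀ ω', f ω' = ∑ s : Fin N, c s (ω' * T) * Ψ s ω') (ω : ℝ)
    (hsum : ∀ s, Summable (fun k : ℤ =>
      (starRingEnd ℂ) (g ((ω - 2 * π * k) / T)) * Ψ s ((ω - 2 * π * k) / T))) :
    sampledCross T g f ω
      = ∑ s : Fin N, c s ω * sampledCross T g (Ψ s) ω := by
  have hx : ∀ k : ℤ, ((ω - 2 * π * k) / T) * T = ω - 2 * π * k :=
    fun k => div_mul_cancel₀ _ hT
  have hc : ∀ (s : Fin N) (k : ℤ), c s (ω - 2 * π * k) = c s ω := by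
    intro s k
    have := (hper s).sub_int_mul_eq (x := ω) k
    rw [show (ω - (k : ℝ) * (2 * π)) = ω - 2 * π * k by ring] at this
    exact this
  have hterm : ∀ k : ℤ, (starRingEnd ℂ) (g ((ω - 2 * π * k) / T)) * f ((ω - 2 * π * k) / T)
      = ∑ s : Fin N, c s ω *
        ((starRingEnd ℂ) (g ((ω - 2 * π * k) / T)) * Ψ s ((ω - 2 * π * k) / T)) := by
    intro k
    rw [hf, Finset.mul_sum]
    refine Finset.sum_congr rfl fun s _ => ?_
    rw [hx k, hc s k]; ring
  unfold sampledCross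
  rw [tsum_congr hterm, Summable.tsum_finsetSum (fun s _ => (hsum s).mul_left _), Finset.mul_sum]
  refine Finset.sum_congr rfl fun s _ => ?_
  rw [tsum_mul_left]; ring

/-- For two orthonormal generators of the same shift-invariant space, the sampled
cross-correlation matrix `M_{φψ}(e^{jω})` is unitary for almost every `ω`. -/
theorem stmt12 (N : ℕ) (T : ℝ) (hT : 0 < T)
    (Φ Ψ : Fin N → ℝ → ℂ)
    (hΦmeas : ∀ ℓ, Measurable (Φ ℓ)) (hΨmeas : ∀ ℓ, Measurable (Ψ ℓ))
    (hΦorth : ∀ ℓ r, ∀ᵐ ω ∂(volume : Measure ℝ),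
      sampledCross T (Φ ℓ) (Φ r) ω = if ℓ = r then 1 else 0)
    (hΨorth : ∀ ℓ r, ∀ᵐ ω ∂(volume : Measure ℝ),
      sampledCross T (Ψ ℓ) (Ψ r) ω = if ℓ = r then 1 else 0)
    (hspanΦ : ∀ ℓ, ∃ c : Fin N → ℝ → ℂ, (∀ r, Function.Periodic (c r) (2 * π)) ∧
      ∀ ω, Φ ℓ ω = ∑ r : Fin N, c r (ω * T) * Ψ r ω)
    (hspanΨ : ∀ ℓ, ∃ c : Fin N → ℝ → ℂ, (∀ r, Function.Periodic (c r) (2 * π)) ∧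
      ∀ ω, Ψ ℓ ω = ∑ r : Fin N, c r (ω * T) * Φ r ω) :
    ∀ᵐ ω ∂(volume : Measure ℝ),
      (Matrix.of fun ℓ r : Fin N => sampledCross T (Φ ℓ) (Ψ r) ω) ∈
        Matrix.unitaryGroup (Fin N) ℂ := by
  have hTne : T ≠ 0 := ne_of_gt hT
  -- choose the coefficients of Φ in terms of Ψ
  choose c hcper hceq using hspanΦ
  have haeF : ∀ᵐ ω ∂(volume : Measure ℝ), ∀ p : Fin N × Fin N,
      sampledCross T (Φ p.1) (Φ p.2) ω = if p.1 = p.2 then 1 else 0 := by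
    rw [ae_all_iff]; exact fun p => hΦorth p.1 p.2
  have haeG : ∀ᵐ ω ∂(volume : Measure ℝ), ∀ p : Fin N × Fin N,
      sampledCross T (Ψ p.1) (Ψ p.2) ω = if p.1 = p.2 then 1 else 0 := by
    rw [ae_all_iff]; exact fun p => hΨorth p.1 p.2
  filter_upwards [haeF, haeG] with ω hΦo hΨo
  -- summability of squared norms along the lattice
  have SΨ : ∀ s, Summable (fun k : ℤ => (‖Ψ s ((ω - 2 * π * k) / T)‖ ^ 2 : ℝ)) := by
    intro s
    refine summable_sq_of_cross_ne_zero T (Ψ s) ω ?_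
    rw [hΨo (s, s)]; simp
  have SΦ : ∀ ℓ, Summable (fun k : ℤ => (‖Φ ℓ ((ω - 2 * π * k) / T)‖ ^ 2 : ℝ)) := by
    intro ℓ
    refine summable_sq_of_cross_ne_zero T (Φ ℓ) ω ?_
    rw [hΦo (ℓ, ℓ)]; simp
  -- the entries of the matrix
  have key : ∀ ℓ r, sampledCross T (Φ ℓ) (Ψ r) ω = (starRingEnd ℂ) (c ℓ r ω) := by
    intro ℓ r
    rw [expand_first T hTne Ψ (c ℓ) (hcper ℓ) (Φ ℓ) (Ψ r) (hceq ℓ) ω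
      (fun s => summable_pair (SΨ s) (SΨ r))]
    rw [Finset.sum_eq_single r (fun s _ hs => by rw [hΨo (s, r)]; simp [hs])
      (fun h => absurd (Finset.mem_univ r) h)]
    rw [hΨo (r, r)]; simp
  have key2 : ∀ s m, sampledCross T (Ψ s) (Φ m) ω = c m s ω := by
    intro s m
    rw [expand_second T hTne Ψ (c m) (hcper m) (Φ m) (Ψ s) (hceq m) ω
      (fun t => summable_pair (SΨ s) (SΨ t))]
    rw [Finset.sum_eq_single s (fun t _ ht => by rw [hΨo (s, t)]; simp [Ne.symm ht])
      (fun h => absurd (Finset.mem_univ s) h)]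
    rw [hΨo (s, s)]; simp
  have key3 : ∀ ℓ m, (if ℓ = m then (1 : ℂ) else 0)
      = ∑ s : Fin N, (starRingEnd ℂ) (c ℓ s ω) * c m s ω := by
    intro ℓ m
    rw [← hΦo (ℓ, m),
      expand_first T hTne Ψ (c ℓ) (hcper ℓ) (Φ ℓ) (Φ m) (hceq ℓ) ω
        (fun s => summable_pair (SΨ s) (SΦ m))]
    exact Finset.sum_congr rfl fun s _ => by rw [key2 s m]
  -- unitarity
  rw [Matrix.mem_unitaryGroup_iff]
  ext ℓ m
  rw [Matrix.mul_apply, Matrix.one_apply, key3 ℓ m]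
  refine Finset.sum_congr rfl fun s _ => ?_
  simp only [Matrix.star_apply, Matrix.of_apply, RCLike.star_def]
  rw [key ℓ s, key m s, Complex.conj_conj]
end

section
/- Suppose x(λ) = D γ(λ) for λ ∈ Λ where D ∈ ℂ^{N×m}, the solution set {γ(λ)} is jointly k-sparse with support S, and the Kruskal rank of D satisfies σ(D) ≥ 2k. If V is any matrix whose column space equals span{x(λ) : λ ∈ Λ}, then the row support of any jointly k-sparse solution U of V = D U equals S; in particular the support S is determined by the finite system V = D U. -/
/-!
Because every `2k` columns of `D` are independent, two `k`-sparse vectors with the same image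
under `D` coincide. The column space of `V = D U` is the image under `D` of the column space of
`U`, and by hypothesis also the image of `span {γ(λ)}`. Hence every column of `U` has the same
image as some vector of `span {γ(λ)}`, which is supported on `S`, so the two coincide;
symmetrically each `γ(λ)` coincides with a vector of the column space of `U`, which is supported
on the row support of `U`.
-/

open Function Submodule

theorem support_subset_of_mem_span {K ι n : Type*} [Field K] {f : ι → n → K}
    {S : Set n} (hf : ∀ a, support (f a) ⊆ S) {v : n → K} (hv : v ∈ span K (Set.range f)) :
    support v ⊆ S := by
  induction hv using Submodule.span_induction with
  | mem _ h => obtain ⟨a, rfl⟩ := h; exact hf a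
  | zero => simp
  | add _ _ _ _ hx hy => exact (support_add _ _).trans (Set.union_subset hx hy)
  | smul c _ _ hx => exact (support_const_smul_subset c _).trans hx

namespace Matrix

variable {K ι ι' m n : Type*} [Field K] [Fintype n] {D : Matrix m n K}

theorem eq_zero_of_mulVec_eq_zero_of_support_subset {Q : Finset n}
    (hQ : LinearIndepOn K D.col (Q : Set n)) {v : n → K} (hv : support v ⊆ Q)
    (hDv : D *ᵥ v = 0) : v = 0 := by
  have hsum : ∑ i : Q, v i • D.col i = 0 := by
    rw [Finset.sum_coe_sort Q (fun i => v i • D.col i),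
      Finset.sum_subset (Finset.subset_univ Q) fun i _ hi => by
        rw [notMem_support.mp fun h => hi (hv h), zero_smul]]
    simpa [mulVec_eq_sum, col] using hDv
  funext i
  by_cases hi : i ∈ Q
  · exact Fintype.linearIndependent_iff.mp hQ (fun i => v i) hsum ⟨i, hi⟩
  · exact notMem_support.mp fun h => hi (hv h)

theorem eq_of_mulVec_eq_of_support_subset {k : ℕ}
    (hK : ∀ Q : Finset n, Q.card ≤ 2 * k → LinearIndepOn K D.col (Q : Set n))
    {S T : Finset n} (hS : S.card ≤ k) (hT : T.card ≤ k) {v w : n → K}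
    (hv : support v ⊆ S) (hw : support w ⊆ T) (h : D *ᵥ v = D *ᵥ w) : v = w := by
  classical
  have hST : (S ∪ T).card ≤ 2 * k := (Finset.card_union_le S T).trans (by omega)
  have hsupp : support (v - w) ⊆ ↑(S ∪ T) := by
    rw [Finset.coe_union]
    exact (support_sub v w).trans (Set.union_subset_union hv hw)
  exact sub_eq_zero.mp <|
    eq_zero_of_mulVec_eq_zero_of_support_subset (hK _ hST) hsupp (by rw [mulVec_sub, h, sub_self])

theorem support_subset_of_map_span_eq {k : ℕ}
    (hK : ∀ Q : Finset n, Q.card ≤ 2 * k → LinearIndepOn K D.col (Q : Set n))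
    {S T : Finset n} (hS : S.card ≤ k) (hT : T.card ≤ k)
    {f : ι → n → K} {g : ι' → n → K} (hf : ∀ a, support (f a) ⊆ S) (hg : ∀ b, support (g b) ⊆ T)
    (h : (span K (Set.range f)).map D.mulVecLin = (span K (Set.range g)).map D.mulVecLin)
    (b : ι') : support (g b) ⊆ S := by
  have hDg : D *ᵥ g b ∈ (span K (Set.range f)).map D.mulVecLin :=
    h ▸ mem_map_of_mem (subset_span ⟨b, rfl⟩)
  obtain ⟨w, hw, hDw⟩ := mem_map.mp hDg
  have hwS := support_subset_of_mem_span hf hw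
  rwa [eq_of_mulVec_eq_of_support_subset hK hS hT hwS (hg b) hDw] at hwS

end Matrix

open Classical in
/-- Continuous-to-finite (CTF) reduction: if the solutions `γ(λ)` of `x(λ) = D γ(λ)` are
jointly `k`-sparse with support `S`, the Kruskal rank of `D` is at least `2k`, and `V` is a
matrix whose column space equals `span{x(λ)}`, then the row support of any jointly `k`-sparse
solution `U` of `V = D U` equals `S`. -/
theorem stmt18 {N m p : ℕ} (k : ℕ)
    (D : Matrix (Fin N) (Fin m) ℂ)
    (hKruskal : ∀ Q : Finset (Fin m), Q.card ≤ 2 * k →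
      LinearIndependent ℂ (fun q : {i // i ∈ Q} => fun r : Fin N => D r q.1))
    {Λ : Type*} (γ : Λ → (Fin m → ℂ)) (x : Λ → (Fin N → ℂ))
    (hx : ∀ lam, x lam = D.mulVec (γ lam))
    (S : Finset (Fin m)) (hScard : S.card ≤ k)
    (hS : ∀ i, i ∈ S ↔ ∃ lam, γ lam i ≠ 0)
    (V : Matrix (Fin N) (Fin p) ℂ)
    (hV : Submodule.span ℂ (Set.range fun j : Fin p => fun r : Fin N => V r j) =
      Submodule.span ℂ (Set.range fun lam : Λ => x lam))
    (U : Matrix (Fin m) (Fin p) ℂ)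
    (hU : V = D * U)
    (hUk : (Finset.univ.filter fun i : Fin m => ∃ j, U i j ≠ 0).card ≤ k) :
    ∀ i : Fin m, (∃ j, U i j ≠ 0) ↔ i ∈ S := by
  set T := Finset.univ.filter fun i : Fin m => ∃ j, U i j ≠ 0
  have hγS (lam : Λ) : support (γ lam) ⊆ S := fun i hi => (hS i).mpr ⟨lam, hi⟩
  have hUT (j : Fin p) : support (U.col j) ⊆ T := fun i hi => by simpa [T] using ⟨j, hi⟩
  have hspan : (span ℂ (Set.range U.col)).map D.mulVecLin =
      (span ℂ (Set.range γ)).map D.mulVecLin := by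
    rw [← Matrix.range_mulVecLin, ← LinearMap.range_comp, ← Matrix.mulVecLin_mul, ← hU,
      Matrix.range_mulVecLin, map_span, ← Set.range_comp]
    exact hV.trans (congrArg _ (congrArg _ (funext hx)))
  intro i
  constructor
  · rintro ⟨j, hij⟩
    exact Matrix.support_subset_of_map_span_eq hKruskal hScard hUk hγS hUT hspan.symm j hij
  · intro hi
    obtain ⟨lam, hlam⟩ := (hS i).mp hi
    simpa [T] using Matrix.support_subset_of_map_span_eq hKruskal hUk hScard hUT hγS hspan lam hlam
end
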